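/- arXiv:2301.02222 — 4 statements merged into one kernel-verified Lean document; each statement's English description precedes it below -/
import Mathlib

section
/- Let ℓ be a prime and let M ∈ GSp₄(F_ℓ) satisfy tr(M) = 0. Then the characteristic polynomial of M is reducible over F_ℓ, i.e., it is a product of two nonconstant polynomials in F_ℓ[t]. -/
/-!
A similitude with multiplier `μ` satisfies `M⁻¹ = μ⁻¹ • J⁻¹ Mᵀ J`, so `tr M⁻¹ = μ⁻¹ tr M = 0`,
and comparing Pfaffians in `Mᵀ J M = μ J` gives `det M = μ²`. Hence the characteristic
polynomial is the biquadratic `X⁴ + b X² + μ²`. Put `x = 2μ - b` and `y = -2μ - b`. If `x = e²`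
it is `(X² + eX + μ)(X² - eX + μ)`, if `y = e²` it is `(X² + eX - μ)(X² - eX - μ)`, and otherwise
`x` and `y` are non-squares of a finite field, so `xy = b² - 4μ²` is a square and the
biquadratic factors as a quadratic in `X²`.
-/

open Matrix Polynomial

/-- The standard symplectic form `[[0, I₂], [−I₂, 0]]` on `F⁴`. -/
def J4 (F : Type*) [CommRing F] : Matrix (Fin 4) (Fin 4) F :=
  !![0, 0, 1, 0;
     0, 0, 0, 1;
     -1, 0, 0, 0;
     0, -1, 0, 0]

namespace Matrix

variable {R : Type*} [CommRing R]

theorem charpoly_coeff_one_of_isUnit_det {n : Type*} [Fintype n] [DecidableEq n]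
    {A : Matrix n n R} (hA : IsUnit A.det) :
    A.charpoly.coeff 1 = -(-1) ^ Fintype.card n * A.det * A⁻¹.trace := by
  have h := charpoly_inv A⁻¹ ((isUnit_iff_isUnit_det _).mpr (isUnit_nonsing_inv_det A hA))
  rw [nonsing_inv_nonsing_inv A hA, det_nonsing_inv, Ring.inverse_inverse hA] at h
  have hsign : (-1 : R[X]) ^ Fintype.card n = C ((-1) ^ Fintype.card n) := by simp
  rw [h, hsign, ← C_mul, coeff_C_mul, coeff_charpolyRev_eq_neg_trace]
  ring

theorem charpoly_fin_four (A : Matrix (Fin 4) (Fin 4) R) :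
    A.charpoly = X ^ 4 - C A.trace * X ^ 3 + C (A.charpoly.coeff 2) * X ^ 2 +
      C (A.charpoly.coeff 1) * X + C A.det := by
  nontriviality R
  have hdeg : A.charpoly.natDegree < 5 := by simp [charpoly_natDegree_eq_dim]
  have hlead : A.charpoly.coeff 4 = 1 := by
    simpa [charpoly_natDegree_eq_dim] using A.charpoly_monic.coeff_natDegree
  conv_lhs => rw [A.charpoly.as_sum_range_C_mul_X_pow' hdeg]
  simp only [Finset.sum_range_succ, Finset.sum_range_zero, trace_eq_neg_charpoly_coeff,
    det_eq_sign_charpoly_coeff, hlead, Fintype.card_fin, map_neg, map_one, map_mul, map_pow]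
  ring

end Matrix

def pfaffian4 {R : Type*} [CommRing R] (A : Matrix (Fin 4) (Fin 4) R) : R :=
  A 0 1 * A 2 3 - A 0 2 * A 1 3 + A 0 3 * A 1 2

section Pfaffian

variable {R : Type*} [CommRing R]

theorem pfaffian4_transpose_mul_mul {A : Matrix (Fin 4) (Fin 4) R}
    (hA : ∀ i j, A j i = -A i j) (hA₀ : ∀ i, A i i = 0) (M : Matrix (Fin 4) (Fin 4) R) :
    pfaffian4 (Mᵀ * A * M) = M.det * pfaffian4 A := by
  rw [det_succ_row_zero]
  simp only [pfaffian4, Fin.sum_univ_four, det_fin_three, submatrix_apply, mul_apply,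
    transpose_apply, hA₀, hA 1 0, hA 2 0, hA 3 0, hA 2 1, hA 3 1, hA 3 2, Fin.succAbove,
    Fin.reduceSucc, Fin.reduceCastSucc, Fin.reduceLT, Fin.coe_ofNat_eq_mod, ↓reduceIte]
  ring

theorem pfaffian4_smul (c : R) (A : Matrix (Fin 4) (Fin 4) R) :
    pfaffian4 (c • A) = c ^ 2 * pfaffian4 A := by
  simp only [pfaffian4, Matrix.smul_apply, smul_eq_mul]
  ring

theorem pfaffian4_J4 : pfaffian4 (J4 R) = -1 := by
  simp [pfaffian4, J4]

theorem det_eq_sq_of_transpose_mul_J4_mul {M : Matrix (Fin 4) (Fin 4) R} {μ : R}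
    (h : Mᵀ * J4 R * M = μ • J4 R) : M.det = μ ^ 2 := by
  have hpf := congrArg pfaffian4 h
  rw [pfaffian4_transpose_mul_mul, pfaffian4_smul, pfaffian4_J4] at hpf
  · simpa using hpf
  · intro i j; fin_cases i <;> fin_cases j <;> simp [J4]
  · intro i; fin_cases i <;> simp [J4]

end Pfaffian

theorem isUnit_det_J4 (R : Type*) [CommRing R] : IsUnit (J4 R).det := by
  simp [J4, det_succ_row_zero, Fin.sum_univ_succ, Fin.succAbove]

section Similitude

variable {K : Type*} [Field K] {n : Type*} [Fintype n] [DecidableEq n]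
  {J M : Matrix n n K} {μ : K}

theorem inv_eq_of_transpose_mul_mul_eq_smul (hJ : IsUnit J.det) (hμ : μ ≠ 0)
    (h : Mᵀ * J * M = μ • J) : M⁻¹ = μ⁻¹ • (J⁻¹ * Mᵀ * J) := by
  refine inv_eq_left_inv ?_
  rw [smul_mul, Matrix.mul_assoc, Matrix.mul_assoc, ← Matrix.mul_assoc Mᵀ, h, Matrix.mul_smul,
    smul_smul, inv_mul_cancel₀ hμ, one_smul, nonsing_inv_mul J hJ]

theorem trace_inv_of_transpose_mul_mul_eq_smul (hJ : IsUnit J.det) (hμ : μ ≠ 0)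
    (h : Mᵀ * J * M = μ • J) : M⁻¹.trace = μ⁻¹ * M.trace := by
  rw [inv_eq_of_transpose_mul_mul_eq_smul hJ hμ h, trace_smul, trace_mul_comm, ← Matrix.mul_assoc,
    mul_nonsing_inv J hJ, Matrix.one_mul, trace_transpose, smul_eq_mul]

end Similitude

theorem FiniteField.isSquare_mul_of_not_isSquare {F : Type*} [Field F] [Finite F] {x y : F}
    (hx : ¬IsSquare x) (hy : ¬IsSquare y) : IsSquare (x * y) := by
  classical
  have := Fintype.ofFinite F
  have hx₀ : x ≠ 0 := fun h => hx (h ▸ IsSquare.zero)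
  have hy₀ : y ≠ 0 := fun h => hy (h ▸ IsSquare.zero)
  rw [← quadraticChar_one_iff_isSquare (mul_ne_zero hx₀ hy₀), map_mul,
    quadraticChar_neg_one_iff_not_isSquare.mpr hx, quadraticChar_neg_one_iff_not_isSquare.mpr hy]
  norm_num

theorem X_pow_four_add_C_mul_X_sq_add_C_sq_eq_mul {R : Type*} [CommRing R] {b c p q q' : R}
    (hb : q + q' - p ^ 2 = b) (hp : p * (q' - q) = 0) (hc : q * q' = c ^ 2) :
    X ^ 4 + C b * X ^ 2 + C (c ^ 2) =
      (X ^ 2 + C p * X + C q) * (X ^ 2 + C (-p) * X + C q') := by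
  subst hb
  have hp' := congrArg C hp
  have hc' := congrArg C hc
  simp only [map_mul, map_sub, map_pow, map_zero] at hp' hc'
  simp only [map_sub, map_add, map_neg, map_pow]
  linear_combination (-X) * hp' - hc'

theorem FiniteField.exists_X_pow_four_add_C_mul_X_sq_add_C_sq_eq_mul {F : Type*} [Field F]
    [Finite F] (b c : F) : ∃ p q q' : F,
      X ^ 4 + C b * X ^ 2 + C (c ^ 2) = (X ^ 2 + C p * X + C q) * (X ^ 2 + C (-p) * X + C q') := by
  by_cases h₁ : IsSquare (2 * c - b)
  · obtain ⟨e, he⟩ := h₁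
    exact ⟨e, c, c, X_pow_four_add_C_mul_X_sq_add_C_sq_eq_mul (by linear_combination he)
      (by ring) (by ring)⟩
  by_cases h₂ : IsSquare (-2 * c - b)
  · obtain ⟨e, he⟩ := h₂
    exact ⟨e, -c, -c, X_pow_four_add_C_mul_X_sq_add_C_sq_eq_mul (by linear_combination he)
      (by ring) (by ring)⟩
  obtain ⟨d, hd⟩ := isSquare_mul_of_not_isSquare h₁ h₂
  have h2 : (2 : F) ≠ 0 := Ring.two_ne_zero fun h => h₁ (isSquare_of_char_two h _)
  refine ⟨0, (b - d) / 2, (b + d) / 2, X_pow_four_add_C_mul_X_sq_add_C_sq_eq_mul ?_ (by ring) ?_⟩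
  · field_simp
    ring
  · field_simp
    linear_combination hd

theorem degree_X_sq_add_C_mul_X_add_C {R : Type*} [CommRing R] [Nontrivial R] (p q : R) :
    (X ^ 2 + C p * X + C q).degree = 2 := by
  compute_degree!

theorem charpoly_reducible_of_trace_zero_general (ℓ : ℕ) [Fact ℓ.Prime]
    (M : Matrix (Fin 4) (Fin 4) (ZMod ℓ)) (μ : ZMod ℓ)
    (hμ : μ ≠ 0)
    (hsymp : Mᵀ * J4 (ZMod ℓ) * M = μ • J4 (ZMod ℓ))
    (htr : M.trace = 0) :
    ∃ f g : Polynomial (ZMod ℓ), 0 < f.degree ∧ 0 < g.degree ∧ M.charpoly = f * g := by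
  have hdet : M.det = μ ^ 2 := det_eq_sq_of_transpose_mul_J4_mul hsymp
  have hc₁ : M.charpoly.coeff 1 = 0 := by
    rw [charpoly_coeff_one_of_isUnit_det (hdet ▸ (pow_ne_zero 2 hμ).isUnit),
      trace_inv_of_transpose_mul_mul_eq_smul (isUnit_det_J4 _) hμ hsymp, htr, mul_zero, mul_zero]
  obtain ⟨p, q, q', hfac⟩ :=
    FiniteField.exists_X_pow_four_add_C_mul_X_sq_add_C_sq_eq_mul (M.charpoly.coeff 2) μ
  refine ⟨X ^ 2 + C p * X + C q, X ^ 2 + C (-p) * X + C q', ?_, ?_, ?_⟩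
  · rw [degree_X_sq_add_C_mul_X_add_C]; norm_num
  · rw [degree_X_sq_add_C_mul_X_add_C]; norm_num
  · rw [M.charpoly_fin_four, htr, hc₁, hdet, ← hfac]
    simp

/-- If `ℓ` is a prime and `M ∈ GSp₄(F_ℓ)` has trace `0`, then the characteristic polynomial
of `M` is a product of two nonconstant polynomials over `F_ℓ`. -/
theorem charpoly_reducible_of_trace_zero (ℓ : ℕ) [Fact ℓ.Prime]
    (M : Matrix (Fin 4) (Fin 4) (ZMod ℓ)) (μ : ZMod ℓ)
    (hM : IsUnit M.det) (hμ : μ ≠ 0)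
    (hsymp : Mᵀ * J4 (ZMod ℓ) * M = μ • J4 (ZMod ℓ))
    (htr : M.trace = 0) :
    ∃ f g : Polynomial (ZMod ℓ), 0 < f.degree ∧ 0 < g.degree ∧ M.charpoly = f * g :=
  charpoly_reducible_of_trace_zero_general ℓ M μ hμ hsymp htr
end

section
/- Let M ∈ GSp₄(F₂) satisfy tr(M) = 0. Then the characteristic polynomial of M over F₂ is either (t+1)⁴ or (t²+t+1)². -/
open Matrix Polynomial

/-!
A similitude `M` with factor `μ` satisfies `M⁻¹ = -μ⁻¹ • J Mᵀ J`, so `tr M⁻¹ = μ⁻¹ tr M = 0`.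
For an invertible `4 × 4` matrix the coefficients of `t³` and `t` in the characteristic
polynomial are `-tr M` and `-det M · tr M⁻¹`, so over `F₂` (where `det M = 1`) it is
`t⁴ + c t² + 1`, and the two choices of `c` give `(t + 1)⁴` and `(t² + t + 1)²`.
-/

theorem J4_mul_self (F : Type*) [CommRing F] : J4 F * J4 F = -1 := by
  ext i j
  fin_cases i <;> fin_cases j <;> simp [J4, Matrix.mul_apply, Fin.sum_univ_four]

-- Compare the coefficients of `t ^ (n - 1)` in `charpoly_inv`.
theorem Matrix.charpoly_coeff_one_of_isUnit_det_s3 {n R : Type*} [Fintype n] [DecidableEq n]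
    [Nonempty n] [CommRing R] (A : Matrix n n R) (hA : IsUnit A.det) :
    A.charpoly.coeff 1 = (-1) ^ (Fintype.card n + 1) * A.det * A⁻¹.trace := by
  nontriviality R
  have hn : 1 ≤ Fintype.card n := Fintype.card_pos
  have hrev : A.charpolyRev.coeff (Fintype.card n - 1) = A.charpoly.coeff 1 := by
    rw [← reverse_charpoly, coeff_reverse, charpoly_natDegree_eq_dim, revAt_le (by omega)]
    congr 1
    omega
  have h := congrArg (coeff · (Fintype.card n - 1))
    (charpoly_inv A ((isUnit_iff_isUnit_det A).mpr hA))
  have hsign : ((-1) ^ Fintype.card n : R[X]) = C ((-1) ^ Fintype.card n) := by simp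
  simp only [hsign, ← C_mul, coeff_C_mul, hrev] at h
  have hsq : ((-1 : R) ^ Fintype.card n) * (-1) ^ Fintype.card n = 1 := by
    rw [← mul_pow]; simp
  rw [trace_eq_neg_charpoly_coeff, h, pow_succ]
  linear_combination (-A.charpoly.coeff 1) * hsq -
    (-1) ^ Fintype.card n * (-1) ^ Fintype.card n * A.charpoly.coeff 1 *
      Ring.mul_inverse_cancel _ hA

theorem Matrix.charpoly_fin_four_of_isUnit_det {R : Type*} [CommRing R]
    (M : Matrix (Fin 4) (Fin 4) R) (hM : IsUnit M.det) :
    M.charpoly = X ^ 4 - C M.trace * X ^ 3 + C (M.charpoly.coeff 2) * X ^ 2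
      - C (M.det * M⁻¹.trace) * X + C M.det := by
  nontriviality R
  have h0 : M.charpoly.coeff 0 = M.det := by
    rw [det_eq_sign_charpoly_coeff, Fintype.card_fin]; ring
  have h1 : M.charpoly.coeff 1 = -(M.det * M⁻¹.trace) := by
    rw [M.charpoly_coeff_one_of_isUnit_det_s3 hM, Fintype.card_fin]; ring
  have h3 : M.charpoly.coeff 3 = -M.trace := by simp [trace_eq_neg_charpoly_coeff]
  conv_lhs => rw [M.charpoly_monic.as_sum, charpoly_natDegree_eq_dim, Fintype.card_fin]
  simp only [Finset.sum_range_succ, Finset.sum_range_zero, h0, h1, h3]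
  simp only [map_neg, map_mul]
  ring

theorem inv_eq_of_transpose_mul_J4_mul {F : Type*} [Field F] {M : Matrix (Fin 4) (Fin 4) F}
    {μ : F} (hμ : μ ≠ 0) (h : Mᵀ * J4 F * M = μ • J4 F) :
    M⁻¹ = -μ⁻¹ • (J4 F * Mᵀ * J4 F) := by
  refine inv_eq_left_inv ?_
  rw [Matrix.smul_mul, Matrix.mul_assoc, Matrix.mul_assoc, ← Matrix.mul_assoc Mᵀ, h,
    Matrix.mul_smul, J4_mul_self, smul_smul, neg_mul, inv_mul_cancel₀ hμ, neg_smul, one_smul,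
    neg_neg]

theorem trace_inv_of_transpose_mul_J4_mul {F : Type*} [Field F] {M : Matrix (Fin 4) (Fin 4) F}
    {μ : F} (hμ : μ ≠ 0) (h : Mᵀ * J4 F * M = μ • J4 F) :
    M⁻¹.trace = μ⁻¹ * M.trace := by
  rw [inv_eq_of_transpose_mul_J4_mul hμ h, trace_smul, trace_mul_cycle, J4_mul_self,
    neg_one_mul, trace_neg, trace_transpose, smul_eq_mul]
  ring

theorem X_pow_four_add_C_mul_X_sq_add_one_zmod_two (c : ZMod 2) :
    (X ^ 4 + C c * X ^ 2 + 1 : (ZMod 2)[X]) = (X + 1) ^ 4 ∨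
      (X ^ 4 + C c * X ^ 2 + 1 : (ZMod 2)[X]) = (X ^ 2 + X + 1) ^ 2 := by
  have two : (2 : (ZMod 2)[X]) = 0 := CharTwo.two_eq_zero
  obtain rfl | rfl : c = 0 ∨ c = 1 := by decide +revert
  · left
    rw [C_0]
    linear_combination (-2 * X ^ 3 - 3 * X ^ 2 - 2 * X) * two
  · right
    rw [C_1]
    linear_combination (-X ^ 3 - X ^ 2 - X) * two

/-- If `M ∈ GSp₄(F₂)` has trace `0`, then its characteristic polynomial is either
`(t+1)⁴` or `(t²+t+1)²`. -/
theorem charpoly_of_trace_zero_gsp4_f2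
    (M : Matrix (Fin 4) (Fin 4) (ZMod 2)) (μ : ZMod 2)
    (hM : IsUnit M.det) (hμ : μ ≠ 0)
    (hsymp : Mᵀ * J4 (ZMod 2) * M = μ • J4 (ZMod 2))
    (htr : M.trace = 0) :
    M.charpoly = (X + 1) ^ 4 ∨ M.charpoly = (X ^ 2 + X + 1) ^ 2 := by
  have hdet : M.det = 1 := (by decide : ∀ x : ZMod 2, IsUnit x → x = 1) _ hM
  have htr_inv : M⁻¹.trace = 0 := by
    rw [trace_inv_of_transpose_mul_J4_mul hμ hsymp, htr, mul_zero]
  rw [M.charpoly_fin_four_of_isUnit_det hM, htr, htr_inv, hdet]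
  simpa using X_pow_four_add_C_mul_X_sq_add_one_zmod_two (M.charpoly.coeff 2)
end

section
/- Let R be a commutative ring and let α, β, γ, δ, a, b, p ∈ R satisfy (t−α)(t−β)(t−γ)(t−δ) = t⁴ − a·t³ + b·t² − p·a·t + p² in R[t], together with αβ = p and γδ = p. Then (t−αγ)(t−αδ)(t−βγ)(t−βδ) = t⁴ − (b−2p)·t³ + p(a²−2b+2p)·t² − p²(b−2p)·t + p⁴ in R[t]. -/
open Polynomial

/-- If `α, β, γ, δ` are the roots of `t⁴ − a·t³ + b·t² − p·a·t + p²` with `αβ = p` and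
`γδ = p`, then the quartic with roots `αγ, αδ, βγ, βδ` (the products of pairs of roots not
multiplying to `p`) is `t⁴ − (b−2p)·t³ + p(a²−2b+2p)·t² − p²(b−2p)·t + p⁴`. -/
theorem quartic_pair_products (R : Type*) [CommRing R] (α β γ δ a b p : R)
    (h : (X - C α) * (X - C β) * (X - C γ) * (X - C δ) =
      X ^ 4 - C a * X ^ 3 + C b * X ^ 2 - C (p * a) * X + C (p ^ 2))
    (h₁ : α * β = p) (h₂ : γ * δ = p) :
    (X - C (α * γ)) * (X - C (α * δ)) * (X - C (β * γ)) * (X - C (β * δ)) =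
      X ^ 4 - C (b - 2 * p) * X ^ 3 + C (p * (a ^ 2 - 2 * b + 2 * p)) * X ^ 2
        - C (p ^ 2 * (b - 2 * p)) * X + C (p ^ 4) := by
  have expand : (X - C α) * (X - C β) * (X - C γ) * (X - C δ) =
      X ^ 4 - C (α + β + γ + δ) * X ^ 3
        + C (α * β + α * γ + α * δ + β * γ + β * δ + γ * δ) * X ^ 2
        - C (α * β * γ + α * β * δ + α * γ * δ + β * γ * δ) * X
        + C (α * β * γ * δ) := by
    simp only [map_add, map_mul]; ring
  rw [expand] at h
  have e1 : α + β + γ + δ = a := by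
    have := congrArg (fun q => q.coeff 3) h
    simp only [← C_pow, coeff_add, coeff_sub, coeff_C_mul, coeff_X_pow, coeff_C, coeff_X] at this
    norm_num at this
    linear_combination -this
  have e2 : α * β + α * γ + α * δ + β * γ + β * δ + γ * δ = b := by
    have := congrArg (fun q => q.coeff 2) h
    simp only [← C_pow, coeff_add, coeff_sub, coeff_C_mul, coeff_X_pow, coeff_C, coeff_X] at this
    norm_num at this
    linear_combination this
  have expand2 : (X - C (α * γ)) * (X - C (α * δ)) * (X - C (β * γ)) * (X - C (β * δ)) =
      X ^ 4 - C (α * γ + α * δ + β * γ + β * δ) * X ^ 3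
        + C (α * γ * (α * δ) + α * γ * (β * γ) + α * γ * (β * δ) + α * δ * (β * γ)
            + α * δ * (β * δ) + β * γ * (β * δ)) * X ^ 2
        - C (α * γ * (α * δ) * (β * γ) + α * γ * (α * δ) * (β * δ)
            + α * γ * (β * γ) * (β * δ) + α * δ * (β * γ) * (β * δ)) * X
        + C (α * γ * (α * δ) * (β * γ) * (β * δ)) := by
    simp only [map_add, map_mul]; ring
  rw [expand2]
  have c1 : α * γ + α * δ + β * γ + β * δ = b - 2 * p := by
    linear_combination e2 - h₁ - h₂
  have c2 : α * γ * (α * δ) + α * γ * (β * γ) + α * γ * (β * δ) + α * δ * (β * γ)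
      + α * δ * (β * δ) + β * γ * (β * δ) = p * (a ^ 2 - 2 * b + 2 * p) := by
    linear_combination (α + β) ^ 2 * h₂ + (γ + δ) ^ 2 * h₁ - 2 * (α * β) * h₂ - 2 * p * h₁
      + p * (α + β + γ + δ + a) * e1 - 2 * p * e2 + 2 * p * h₁ + 2 * p * h₂
  have c3 : α * γ * (α * δ) * (β * γ) + α * γ * (α * δ) * (β * δ)
      + α * γ * (β * γ) * (β * δ) + α * δ * (β * γ) * (β * δ) = p ^ 2 * (b - 2 * p) := by
    linear_combination (α * γ + α * δ + β * γ + β * δ) * (α * β * h₂ + p * h₁)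
      + p ^ 2 * (e2 - h₁ - h₂)
  have c4 : α * γ * (α * δ) * (β * γ) * (β * δ) = p ^ 4 := by
    linear_combination (α * β) ^ 2 * (γ * δ + p) * h₂ + p ^ 2 * (α * β + p) * h₁
  rw [c1, c2, c3, c4]
end

section
/- Let q be a prime power and let K be a finite field with q² elements, and let σ : K → K be the map x ↦ x^q. Then the cardinality of the group {m ∈ GL₂(K) : mᵀ·σ(m) = λ·I₂ for some λ ∈ Kˣ with σ(λ) = λ}, where σ(m) denotes the matrix obtained by applying σ to each entry of m, equals q(q²−1)². (This group is the general unitary group GU₂(F_{q²}).) -/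
open Matrix

set_option linter.unusedSectionVars false

section aux
variable {K : Type*} [Field K] [Fintype K] [DecidableEq K] {q : ℕ}

lemma aux_pow_le (n : ℕ) (hn : 0 < n) (a : K) :
    Nat.card {x : K // x ^ n = a} ≤ n := by
  rw [Nat.card_eq_fintype_card, Fintype.card_subtype]
  refine le_trans (Finset.card_le_card ?_)
    ((Polynomial.nthRoots n a).toFinset_card_le.trans (Polynomial.card_nthRoots n a))
  intro x hx
  rw [Finset.mem_filter] at hx
  rw [Multiset.mem_toFinset, Polynomial.mem_nthRoots hn]
  exact hx.2

lemma aux_char (hq : ∃ p n : ℕ, p.Prime ∧ 0 < n ∧ q = p ^ n)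
    (hK : Fintype.card K = q ^ 2) :
    ((-1 : K) ^ q = -1) ∧ ∀ x y : K, (x + y) ^ q = x ^ q + y ^ q := by
  obtain ⟨p, n, hp, hn, rfl⟩ := hq
  have hchar : CharP K (ringChar K) := ringChar.charP K
  obtain ⟨m, hpr, hcard⟩ := FiniteField.card K (ringChar K)
  have hdvd : ringChar K ∣ p ^ (n * 2) := by
    rw [pow_mul, ← hK, hcard]
    exact dvd_pow_self _ (by positivity)
  have hrc : ringChar K = p :=
    (Nat.prime_dvd_prime_iff_eq hpr hp).mp (hpr.dvd_of_dvd_pow hdvd)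
  haveI : CharP K p := hrc ▸ hchar
  haveI : Fact p.Prime := ⟨hp⟩
  constructor
  · by_cases hp2 : p = 2
    · subst hp2
      haveI : CharP K 2 := by assumption
      rw [show ((-1 : K)) = 1 from (CharTwo.neg_eq 1), one_pow]
    · exact Odd.neg_one_pow ((hp.odd_of_ne_two hp2).pow)
  · intro x y
    exact add_pow_char_pow x y p n


lemma aux_norm (hq2 : 2 ≤ q) (hK : Fintype.card K = q ^ 2) :
    ∀ μ : K, μ ≠ 0 → μ ^ q = μ → Nat.card {x : K // x ^ (q + 1) = μ} = q + 1 := by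
  obtain ⟨r, rfl⟩ : ∃ r, q = r + 2 := ⟨q - 2, by omega⟩
  have hB : (r + 2) ^ 2 - 1 = r ^ 2 + 4 * r + 3 := by
    have hring : (r + 2) ^ 2 = r ^ 2 + 4 * r + 4 := by ring
    omega
  have hring2 : (r + 2 + 1) * (r + 2 - 1) = (r + 2) ^ 2 - 1 := by
    rw [hB, show r + 2 - 1 = r + 1 from rfl]; ring
  have hq1 : (0:ℕ) < r + 2 - 1 := by omega
  set φ : Kˣ →* Kˣ := powMonoidHom (r + 2 + 1) with hφ
  have hφa : ∀ x : Kˣ, φ x = x ^ (r + 2 + 1) := fun x => rfl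
  have hcardu : Nat.card Kˣ = (r + 2) ^ 2 - 1 := by
    rw [Nat.card_eq_fintype_card, Fintype.card_units, hK]
  have kmem : ∀ u : φ.ker, ((u : Kˣ) : K) ^ (r + 2 + 1) = 1 := by
    intro u
    have hu : (u : Kˣ) ^ (r + 2 + 1) = 1 := by
      have := u.2; rwa [MonoidHom.mem_ker, hφa] at this
    have := congrArg Units.val hu
    simpa using this
  have kinj : Function.Injective
      (fun u : φ.ker => (⟨((u : Kˣ) : K), kmem u⟩ : {x : K // x ^ (r+2+1) = 1})) := by
    intro u v h
    apply Subtype.ext; apply Units.ext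
    exact congrArg Subtype.val h
  have hker_le : Nat.card φ.ker ≤ r + 2 + 1 :=
    le_trans (Nat.card_le_card_of_injective _ kinj) (aux_pow_le _ (by omega) 1)
  have rprop : ∀ y : Kˣ, y ∈ φ.range → ((y : Kˣ) : K) ^ (r + 2 - 1) = 1 := by
    intro y hy
    obtain ⟨x, hx⟩ := hy
    have h3 : y ^ (r + 2 - 1) = 1 := by
      rw [← hx, hφa, ← pow_mul, hring2, ← hcardu]
      exact pow_card_eq_one'
    have := congrArg Units.val h3
    simpa using this
  have rinj : Function.Injective
      (fun y : φ.range => (⟨((y : Kˣ) : K), rprop y.1 y.2⟩ : {x : K // x ^ (r+2-1) = 1})) := by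
    intro u v h
    apply Subtype.ext; apply Units.ext
    exact congrArg Subtype.val h
  have hrange_le : Nat.card φ.range ≤ r + 1 :=
    le_trans (Nat.card_le_card_of_injective _ rinj) (aux_pow_le _ hq1 1)
  have hiso : Nat.card φ.range * Nat.card φ.ker = r ^ 2 + 4 * r + 3 := by
    rw [← hB, ← hcardu, Subgroup.card_eq_card_quotient_mul_card_subgroup φ.ker,
      Nat.card_congr (QuotientGroup.quotientKerEquivRange φ).toEquiv]
  have hrangepos : 0 < Nat.card φ.range := Nat.card_pos
  have hker_eq : Nat.card φ.ker = r + 2 + 1 := by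
    have h1 : Nat.card φ.ker ≥ r + 3 := by nlinarith
    omega
  have hrange_eq : Nat.card φ.range = r + 1 := by
    have h2 := hiso
    rw [hker_eq] at h2
    have h3 : (r + 1) * (r + 2 + 1) = r ^ 2 + 4 * r + 3 := by ring
    exact Nat.eq_of_mul_eq_mul_right (by omega) (h2.trans h3.symm)
  have hFle : Nat.card {x : K // x ^ (r+2-1) = 1} ≤ r + 1 := aux_pow_le _ hq1 1
  have hFcard : Nat.card {x : K // x ^ (r+2-1) = 1} = r + 1 :=
    le_antisymm hFle (hrange_eq ▸ Nat.card_le_card_of_injective _ rinj)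
  have hFbij : Function.Bijective
      (fun y : φ.range => (⟨((y : Kˣ) : K), rprop y.1 y.2⟩ : {x : K // x ^ (r+2-1) = 1})) :=
    (Nat.bijective_iff_injective_and_card _).mpr ⟨rinj, by rw [hrange_eq, hFcard]⟩
  intro μ hμ0 hμq
  have hμ1 : μ ^ (r + 2 - 1) = 1 := by
    have h1 : μ ^ (r + 2 - 1) * μ = 1 * μ := by
      rw [one_mul, ← pow_succ, show r + 2 - 1 + 1 = r + 2 from rfl]
      exact hμq
    exact mul_right_cancel₀ hμ0 h1
  obtain ⟨y, hy⟩ := hFbij.2 ⟨μ, hμ1⟩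
  obtain ⟨x, hx⟩ := y.2
  have hyμ : ((y.1 : Kˣ) : K) = μ := congrArg Subtype.val hy
  have hxμ : ((x : Kˣ) : K) ^ (r + 2 + 1) = μ := by
    rw [hφa] at hx
    have := congrArg Units.val hx
    simpa [hyμ] using this
  have hx0 : ((x : Kˣ) : K) ≠ 0 := Units.ne_zero x
  have eker : Nat.card {t : K // t ^ (r+2+1) = 1} = r + 2 + 1 := by
    refine le_antisymm (aux_pow_le _ (by omega) 1) ?_
    have h := Nat.card_le_card_of_injective
      (fun u : φ.ker => (⟨((u : Kˣ) : K), kmem u⟩ : {x : K // x ^ (r+2+1) = 1})) kinj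
    omega
  have e2 : {t : K // t ^ (r+2+1) = 1} ≃ {z : K // z ^ (r+2+1) = μ} :=
    { toFun := fun t => ⟨((x : Kˣ) : K) * t.1, by rw [mul_pow, t.2, mul_one, hxμ]⟩
      invFun := fun z => ⟨z.1 / ((x : Kˣ) : K), by rw [div_pow, z.2, hxμ, div_self hμ0]⟩
      left_inv := fun t => Subtype.ext (by field_simp)
      right_inv := fun z => Subtype.ext (by field_simp) }
  rw [← Nat.card_congr e2, eker]

end aux

/-- For `K` a finite field with `q²` elements and `σ : x ↦ x^q` its nontrivial automorphism
over the subfield with `q` elements, the general unitary group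
`{m ∈ GL₂(K) : mᵀ·σ(m) = λ·I₂ for some λ ∈ Kˣ with σ(λ) = λ}` has cardinality `q(q²−1)²`. -/
theorem card_gu2 (q : ℕ) (hq : ∃ p n : ℕ, p.Prime ∧ 0 < n ∧ q = p ^ n)
    (K : Type*) [Field K] [Fintype K] [DecidableEq K] (hK : Fintype.card K = q ^ 2) :
    Nat.card {m : GL (Fin 2) K //
        ∃ l : K, l ≠ 0 ∧ l ^ q = l ∧
          (m : Matrix (Fin 2) (Fin 2) K)ᵀ *
              ((m : Matrix (Fin 2) (Fin 2) K).map fun x => x ^ q) =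
            l • (1 : Matrix (Fin 2) (Fin 2) K)} =
      q * (q ^ 2 - 1) ^ 2 := by
  have hq2 : 2 ≤ q := by
    obtain ⟨p, n, hp, hn, rfl⟩ := hq
    calc 2 ≤ p := hp.two_le
    _ ≤ p ^ n := Nat.le_self_pow (by omega) p
  have hq0 : q ≠ 0 := by omega
  obtain ⟨hneg, hadd⟩ := aux_char hq hK
  have hQQ : ∀ x : K, x ^ (q * q) = x := by
    intro x
    have h := FiniteField.pow_card x
    rwa [hK, pow_two] at h
  have hfrobinj : Function.Injective (fun x : K => x ^ q) := by
    intro x y h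
    simp only at h
    have h2 : (x ^ q) ^ q = (y ^ q) ^ q := by rw [h]
    rwa [← pow_mul, ← pow_mul, hQQ, hQQ] at h2
  have hnorm := aux_norm hq2 hK
  have cR : Nat.card {t : K // t ^ (q + 1) = 1} = q + 1 := hnorm 1 one_ne_zero (one_pow q)
  have cR' : Nat.card {t : K // t ^ (q + 1) = -1} = q + 1 :=
    hnorm (-1) (neg_ne_zero.mpr one_ne_zero) hneg
  -- scalar-form predicate
  set C : (K × K) × K × K → Prop := fun v =>
    v.1.1 * v.2.1 ^ q + v.1.2 * v.2.2 ^ q = 0 ∧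
    v.2.1 * v.1.1 ^ q + v.2.2 * v.1.2 ^ q = 0 ∧
    v.2.1 * v.2.1 ^ q + v.2.2 * v.2.2 ^ q = v.1.1 * v.1.1 ^ q + v.1.2 * v.1.2 ^ q ∧
    v.1.1 * v.1.1 ^ q + v.1.2 * v.1.2 ^ q ≠ 0 with hC
  -- the map from quadruples to the unitary group
  have key : ∀ v : (K × K) × K × K, C v →
      ((!![v.1.1, v.2.1; v.1.2, v.2.2] : Matrix (Fin 2) (Fin 2) K)ᵀ *
        ((!![v.1.1, v.2.1; v.1.2, v.2.2] : Matrix (Fin 2) (Fin 2) K).map fun x => x ^ q) =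
        (v.1.1 * v.1.1 ^ q + v.1.2 * v.1.2 ^ q) • (1 : Matrix (Fin 2) (Fin 2) K)) := by
    rintro ⟨⟨a, c⟩, b, d⟩ ⟨h1, h2, h3, h4⟩
    simp only at h1 h2 h3 h4
    ext i j
    fin_cases i <;> fin_cases j <;>
      simp [Matrix.mul_apply, Fin.sum_univ_two, Matrix.one_fin_two, Matrix.vecHead, Matrix.transpose_apply] <;>
      first
        | linear_combination h1
        | linear_combination h2
        | linear_combination h3
        | linear_combination
        | ring
  -- determinant is nonzero
  have hlam : ∀ a c : K, (a * a ^ q + c * c ^ q) ^ q = a * a ^ q + c * c ^ q := by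
    intro a c
    rw [hadd, mul_pow, mul_pow, ← pow_mul, ← pow_mul, hQQ, hQQ]
    ring
  have hdetne : ∀ v : (K × K) × K × K, C v →
      (!![v.1.1, v.2.1; v.1.2, v.2.2] : Matrix (Fin 2) (Fin 2) K).det ≠ 0 := by
    rintro ⟨⟨a, c⟩, b, d⟩ ⟨h1, h2, h3, h4⟩
    simp only at h4
    have hd := congrArg Matrix.det (key ((a, c), b, d) ⟨h1, h2, h3, h4⟩)
    rw [Matrix.det_mul, Matrix.det_transpose, Matrix.det_smul, Matrix.det_one] at hd
    refine left_ne_zero_of_mul (b := ((!![a, b; c, d] : Matrix (Fin 2) (Fin 2) K).map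
      fun x => x ^ q).det) ?_
    rw [hd]
    simp only [Fintype.card_fin, mul_one]
    exact pow_ne_zero _ h4
  set F : {v : (K × K) × K × K // C v} → {m : GL (Fin 2) K //
      ∃ l : K, l ≠ 0 ∧ l ^ q = l ∧
        (m : Matrix (Fin 2) (Fin 2) K)ᵀ *
            ((m : Matrix (Fin 2) (Fin 2) K).map fun x => x ^ q) =
          l • (1 : Matrix (Fin 2) (Fin 2) K)} := fun v =>
    ⟨Matrix.GeneralLinearGroup.mkOfDetNeZero _ (hdetne v.1 v.2),
      ⟨v.1.1.1 * v.1.1.1 ^ q + v.1.1.2 * v.1.1.2 ^ q, v.2.2.2.2, hlam _ _, key v.1 v.2⟩⟩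
    with hF
  have hFbij : Function.Bijective F := by
    constructor
    · rintro ⟨⟨⟨a, c⟩, b, d⟩, hu⟩ ⟨⟨⟨a', c'⟩, b', d'⟩, hv⟩ h
      have h2 : (!![a, b; c, d] : Matrix (Fin 2) (Fin 2) K) = !![a', b'; c', d'] :=
        congrArg (fun x : {m : GL (Fin 2) K //
          ∃ l : K, l ≠ 0 ∧ l ^ q = l ∧
            (m : Matrix (Fin 2) (Fin 2) K)ᵀ *
                ((m : Matrix (Fin 2) (Fin 2) K).map fun x => x ^ q) =
              l • (1 : Matrix (Fin 2) (Fin 2) K)} =>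
          ((x.1 : Matrix (Fin 2) (Fin 2) K))) h
      have e00 := congrFun (congrFun h2 0) 0
      have e01 := congrFun (congrFun h2 0) 1
      have e10 := congrFun (congrFun h2 1) 0
      have e11 := congrFun (congrFun h2 1) 1
      simp only [Matrix.cons_val', Matrix.cons_val_zero, Matrix.cons_val_one, Matrix.head_cons,
        Matrix.empty_val', Matrix.cons_val_fin_one, Matrix.head_fin_const,
        Matrix.of_apply] at e00 e01 e10 e11
      apply Subtype.ext
      simp only [Prod.mk.injEq]
      exact ⟨⟨e00, e10⟩, e01, e11⟩
    · rintro ⟨m, l, hl0, hlq, hm⟩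
      have e00 := congrFun (congrFun hm 0) 0
      have e01 := congrFun (congrFun hm 0) 1
      have e10 := congrFun (congrFun hm 1) 0
      have e11 := congrFun (congrFun hm 1) 1
      simp only [Matrix.mul_apply, Fin.sum_univ_two, Matrix.transpose_apply, Matrix.map_apply,
        Matrix.smul_apply, Matrix.one_fin_two, Matrix.cons_val', Matrix.cons_val_zero,
        Matrix.cons_val_one, Matrix.head_cons, Matrix.empty_val', Matrix.cons_val_fin_one,
        Matrix.head_fin_const, Matrix.of_apply, smul_eq_mul, mul_one,
        mul_zero] at e00 e01 e10 e11
      refine ⟨⟨(((m : Matrix (Fin 2) (Fin 2) K) 0 0, (m : Matrix (Fin 2) (Fin 2) K) 1 0),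
          (m : Matrix (Fin 2) (Fin 2) K) 0 1, (m : Matrix (Fin 2) (Fin 2) K) 1 1),
          e01, e10, e11.trans e00.symm, by rw [e00]; exact hl0⟩, ?_⟩
      rw [hF]
      apply Subtype.ext
      apply Units.ext
      exact (Matrix.eta_fin_two (m : Matrix (Fin 2) (Fin 2) K)).symm
  -- the fibration over the first column
  have hbq : ∀ t c : K, (-(t * c ^ q)) ^ q = -(t ^ q * c) := by
    intro t c
    rw [neg_pow, hneg, mul_pow, ← pow_mul, hQQ]
    ring
  have hdq : ∀ t a : K, (t * a ^ q) ^ q = t ^ q * a := by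
    intro t a
    rw [mul_pow, ← pow_mul, hQQ]
  set H : {ac : K × K // ¬(ac.1 * ac.1 ^ q + ac.2 * ac.2 ^ q = 0)} ×
      {t : K // t ^ (q + 1) = 1} → {v : (K × K) × K × K // C v} := fun p =>
    ⟨((p.1.1.1, p.1.1.2), -(p.2.1 * p.1.1.2 ^ q), p.2.1 * p.1.1.1 ^ q), by
      obtain ⟨⟨⟨a, c⟩, hac⟩, ⟨t, ht⟩⟩ := p
      simp only at hac ⊢
      have ht' : t * t ^ q = 1 := by rw [← pow_succ']; exact ht
      refine ⟨?_, ?_, ?_, hac⟩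
      · rw [hbq, hdq]; ring
      · ring
      · rw [hbq, hdq]; linear_combination (a * a ^ q + c * c ^ q) * ht'⟩ with hH
  have hHbij : Function.Bijective H := by
    constructor
    · rintro ⟨⟨⟨a, c⟩, hac⟩, ⟨t, ht⟩⟩ ⟨⟨⟨a', c'⟩, hac'⟩, ⟨t', ht'⟩⟩ h
      have hv := congrArg Subtype.val h
      simp only [hH, Prod.mk.injEq] at hv
      obtain ⟨⟨ha, hc⟩, hb, hd⟩ := hv
      subst ha; subst hc
      simp only at hac
      have hteq : t = t' := by
        rcases (show a ≠ 0 ∨ c ≠ 0 by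
          by_contra hcon
          push_neg at hcon
          apply hac
          rw [hcon.1, hcon.2, zero_pow hq0]
          ring) with hne | hne
        · exact mul_right_cancel₀ (pow_ne_zero q hne) hd
        · exact mul_right_cancel₀ (pow_ne_zero q hne) (neg_injective hb)
      subst hteq
      rfl
    · rintro ⟨⟨⟨a, c⟩, b, d⟩, h1, h2, h3, h4⟩
      dsimp only at h1 h2 h3 h4
      by_cases ha : a = 0
      · subst ha
        have hc : c ≠ 0 := by
          intro h0
          apply h4
          rw [h0, zero_pow hq0]
          ring
        have hcq : c ^ q ≠ 0 := pow_ne_zero _ hc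
        have hd0 : d = 0 := by
          have hcd : c * d ^ q = 0 := by
            have := h1
            rw [zero_mul, zero_add] at this
            exact this
          rcases mul_eq_zero.mp hcd with h0 | h0
          · exact absurd h0 hc
          · exact pow_eq_zero_iff hq0 |>.mp h0
        have hbb : b * b ^ q = c * c ^ q := by
          rw [hd0] at h3
          rw [zero_pow hq0] at h3
          linear_combination h3
        have htpow : (-(b / c ^ q)) ^ q = -(b ^ q / c) := by
          rw [neg_pow, hneg, div_pow, ← pow_mul, hQQ]
          ring
        refine ⟨(⟨(0, c), h4⟩, ⟨-(b / c ^ q), ?_⟩), ?_⟩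
        · rw [pow_succ', htpow]
          field_simp
          linear_combination hbb
        · have hb' : -(-(b / c ^ q) * c ^ q) = b := by field_simp
          have hd' : -(b / c ^ q) * (0 : K) ^ q = d := by
            rw [zero_pow hq0, mul_zero, hd0]
          rw [hH]
          refine Subtype.ext ?_
          dsimp only
          rw [hb', hd']
      · have haq : a ^ q ≠ 0 := pow_ne_zero _ ha
        have hdd : d / a ^ q * a ^ q = d := div_mul_cancel₀ d haq
        have htq : (d / a ^ q) ^ q = d ^ q / a := by
          rw [div_pow, ← pow_mul, hQQ]
        have hb : -(d / a ^ q * c ^ q) = b := by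
          apply hfrobinj
          simp only
          rw [hbq, htq]
          have hbq2 : a * b ^ q = -(c * d ^ q) := by linear_combination h1
          field_simp
          linear_combination -hbq2
        have ht' : d / a ^ q * (d / a ^ q) ^ q = 1 := by
          have h3' : (-(d / a ^ q * c ^ q)) * (-(d / a ^ q * c ^ q)) ^ q +
              (d / a ^ q * a ^ q) * (d / a ^ q * a ^ q) ^ q = a * a ^ q + c * c ^ q := by
            rw [hb, hdd]; exact h3
          rw [hbq, hdq] at h3'
          have hz : (d / a ^ q * (d / a ^ q) ^ q - 1) * (a * a ^ q + c * c ^ q) = 0 := by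
            linear_combination h3'
          rcases mul_eq_zero.mp hz with h0 | h0
          · exact sub_eq_zero.mp h0
          · exact absurd h0 h4
        refine ⟨(⟨(a, c), h4⟩, ⟨d / a ^ q, by rw [pow_succ']; exact ht'⟩), ?_⟩
        rw [hH]
        refine Subtype.ext ?_
        dsimp only
        rw [hb, hdd]
  -- counting the degenerate first columns
  set J : Option ({t : K // t ^ (q + 1) = -1} × Kˣ) →
      {ac : K × K // ac.1 * ac.1 ^ q + ac.2 * ac.2 ^ q = 0} := fun o =>
    match o with
    | none => ⟨(0, 0), by simp [zero_pow hq0]⟩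
    | some (⟨t, ht⟩, c) => ⟨(t * (c : K), (c : K)), by
        have ht' : t * t ^ q = -1 := by rw [← pow_succ']; exact ht
        simp only
        rw [mul_pow]
        linear_combination ((c : K) * (c : K) ^ q) * ht'⟩ with hJ
  have hJbij : Function.Bijective J := by
    constructor
    · intro o1 o2 h
      match o1, o2 with
      | none, none => rfl
      | none, some (⟨t, ht⟩, c) =>
        have h2 : (0 : K) = (c : K) := congrArg (fun z => z.1.2) h
        exact absurd h2.symm c.ne_zero
      | some (⟨t, ht⟩, c), none =>
        have h2 : (c : K) = (0 : K) := congrArg (fun z => z.1.2) h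
        exact absurd h2 c.ne_zero
      | some (⟨t, ht⟩, c), some (⟨t', ht'⟩, c') =>
        have h2 : ((t * (c : K), (c : K)) : K × K) = (t' * (c' : K), (c' : K)) :=
          congrArg Subtype.val h
        simp only [Prod.mk.injEq] at h2
        obtain ⟨htc, hcc⟩ := h2
        have hceq : c = c' := Units.ext hcc
        subst hceq
        have hteq : t = t' := mul_right_cancel₀ c.ne_zero htc
        subst hteq
        rfl
    · rintro ⟨⟨a, c⟩, hz⟩
      simp only at hz
      by_cases hc : c = 0
      · subst hc
        have ha : a = 0 := by
          rw [zero_pow hq0, mul_zero, add_zero] at hz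
          rcases mul_eq_zero.mp hz with h0 | h0
          · exact h0
          · exact pow_eq_zero_iff hq0 |>.mp h0
        exact ⟨none, Subtype.ext (by rw [hJ]; simp [ha])⟩
      · have ht' : (a / c) * (a / c) ^ q = -1 := by
          have hac : a * a ^ q = -(c * c ^ q) := by linear_combination hz
          rw [div_pow]
          field_simp
          linear_combination hac
        refine ⟨some (⟨a / c, by rw [pow_succ']; exact ht'⟩, Units.mk0 c hc), ?_⟩
        rw [hJ]
        refine Subtype.ext ?_
        dsimp only [Units.val_mk0]
        rw [div_mul_cancel₀ a hc]
  -- assembling the count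
  have n1 : Nat.card {m : GL (Fin 2) K //
      ∃ l : K, l ≠ 0 ∧ l ^ q = l ∧
        (m : Matrix (Fin 2) (Fin 2) K)ᵀ *
            ((m : Matrix (Fin 2) (Fin 2) K).map fun x => x ^ q) =
          l • (1 : Matrix (Fin 2) (Fin 2) K)} = Nat.card {v : (K × K) × K × K // C v} :=
    (Nat.card_congr (Equiv.ofBijective F hFbij)).symm
  have n2 : Nat.card {v : (K × K) × K × K // C v} =
      Nat.card {ac : K × K // ¬(ac.1 * ac.1 ^ q + ac.2 * ac.2 ^ q = 0)} * (q + 1) := by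
    rw [← Nat.card_congr (Equiv.ofBijective H hHbij), Nat.card_prod, cR]
  have n3 : Nat.card {ac : K × K // ac.1 * ac.1 ^ q + ac.2 * ac.2 ^ q = 0} =
      (q + 1) * (q ^ 2 - 1) + 1 := by
    have hKu : Nat.card Kˣ = q ^ 2 - 1 := by
      rw [Nat.card_eq_fintype_card, Fintype.card_units, hK]
    rw [← Nat.card_congr (Equiv.ofBijective J hJbij), Finite.card_option, Nat.card_prod, cR',
      hKu]
  have n4 : Nat.card {ac : K × K // ¬(ac.1 * ac.1 ^ q + ac.2 * ac.2 ^ q = 0)} +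
      Nat.card {ac : K × K // ac.1 * ac.1 ^ q + ac.2 * ac.2 ^ q = 0} = q ^ 2 * q ^ 2 := by
    have e := Nat.card_congr
      (Equiv.sumCompl fun ac : K × K => ac.1 * ac.1 ^ q + ac.2 * ac.2 ^ q = 0)
    have hKK : Nat.card K = q ^ 2 := by rw [Nat.card_eq_fintype_card, hK]
    rw [Nat.card_sum, Nat.card_prod, hKK] at e
    omega
  rw [n1, n2]
  obtain ⟨r, rfl⟩ : ∃ r, q = r + 2 := ⟨q - 2, by omega⟩
  have hB : (r + 2) ^ 2 - 1 = r ^ 2 + 4 * r + 3 := by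
    have : (r + 2) ^ 2 = r ^ 2 + 4 * r + 4 := by ring
    omega
  rw [hB] at n3 ⊢
  have e3 : (r + 2 + 1) * (r ^ 2 + 4 * r + 3) = r ^ 3 + 7 * r ^ 2 + 15 * r + 9 := by ring
  rw [e3] at n3
  have e4 : (r + 2) ^ 2 * (r + 2) ^ 2 = r ^ 4 + 8 * r ^ 3 + 24 * r ^ 2 + 32 * r + 16 := by ring
  rw [e4] at n4
  have hcT : Nat.card {ac : K × K // ¬(ac.1 * ac.1 ^ (r + 2) + ac.2 * ac.2 ^ (r + 2) = 0)} =
      r ^ 4 + 7 * r ^ 3 + 17 * r ^ 2 + 17 * r + 6 := by omega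
  rw [hcT]
  ring
end
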